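/- arXiv:2207.04860 — 6 statements merged into one kernel-verified Lean document; each statement's English description precedes it below -/
import Mathlib

section
/- Suppose (γ,P) satisfies the dissipation LMI M(γ,P) ⪯ 0. Let x : ℕ → ℝⁿ and a : ℕ → ℝᵐ be sequences satisfying x[k+1] = A x[k] + B a[k] for all k, with x[0] = 0, and let y_p[k] = C_p x[k] + D_p a[k] and y_r[k] = C_r x[k] + D_r a[k]. Then for every N ∈ ℕ, ∑_{k=0}^{N-1} ‖y_p[k]‖² ≤ γ · ∑_{k=0}^{N-1} ‖y_r[k]‖² − x[N]ᵀ P x[N]. -/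
open Matrix Finset

/-- If `(γ, P)` satisfies the dissipation LMI `M(γ,P) ⪯ 0`, then along any
trajectory of the system starting at `x 0 = 0`, for every horizon `N` the accumulated
performance energy is bounded by `γ` times the accumulated residual energy minus the
stored energy `x[N]ᵀ P x[N]`. -/
theorem dissipation_truncated_energy_bound
    {n m p r : ℕ}
    (A : Matrix (Fin n) (Fin n) ℝ) (B : Matrix (Fin n) (Fin m) ℝ)
    (Cp : Matrix (Fin p) (Fin n) ℝ) (Dp : Matrix (Fin p) (Fin m) ℝ)
    (Cr : Matrix (Fin r) (Fin n) ℝ) (Dr : Matrix (Fin r) (Fin m) ℝ)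
    (γ : ℝ) (hγ : 0 ≤ γ)
    (P : Matrix (Fin n) (Fin n) ℝ) (hP : P.IsSymm)
    (hLMI : ∀ (x : Fin n → ℝ) (a : Fin m → ℝ),
      (A.mulVec x + B.mulVec a) ⬝ᵥ P.mulVec (A.mulVec x + B.mulVec a)
        - x ⬝ᵥ P.mulVec x
        + ∑ i, ((Cp.mulVec x + Dp.mulVec a) i) ^ 2
        - γ * ∑ i, ((Cr.mulVec x + Dr.mulVec a) i) ^ 2 ≤ 0)
    (x : ℕ → Fin n → ℝ) (a : ℕ → Fin m → ℝ)
    (hdyn : ∀ k, x (k + 1) = A.mulVec (x k) + B.mulVec (a k))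
    (hx0 : x 0 = 0)
    (yp : ℕ → Fin p → ℝ) (yr : ℕ → Fin r → ℝ)
    (hyp : ∀ k, yp k = Cp.mulVec (x k) + Dp.mulVec (a k))
    (hyr : ∀ k, yr k = Cr.mulVec (x k) + Dr.mulVec (a k)) :
    ∀ N : ℕ,
      ∑ k ∈ Finset.range N, ∑ i, (yp k i) ^ 2
        ≤ γ * ∑ k ∈ Finset.range N, ∑ i, (yr k i) ^ 2
          - x N ⬝ᵥ P.mulVec (x N) := by
  intro N
  induction N with
  | zero =>
      simp [hx0, Matrix.mulVec_zero, dotProduct_zero]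
  | succ N ih =>
      have h := hLMI (x N) (a N)
      rw [Finset.sum_range_succ, Finset.sum_range_succ, hdyn N, hyp N, hyr N]
      nlinarith [h]
end

section
/- Suppose (γ,P) satisfies the dissipation LMI M(γ,P) ⪯ 0. Let x : ℕ → ℝⁿ and a : ℕ → ℝᵐ be sequences satisfying x[k+1] = A x[k] + B a[k] for all k, with x[0] = 0 and x[N] = 0 for some N ∈ ℕ, and let y_p[k] = C_p x[k] + D_p a[k] and y_r[k] = C_r x[k] + D_r a[k]. If ∑_{k=0}^{N-1} ‖y_r[k]‖² ≤ 1, then ∑_{k=0}^{N-1} ‖y_p[k]‖² ≤ γ. In other words, any γ feasible for the dual SDP is an upper bound on the impact of any stealthy attack that starts and ends at the equilibrium x = 0. -/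
open Matrix Finset

/-- Any `γ` feasible for the dual SDP (i.e. such that the dissipation LMI
`M(γ,P) ⪯ 0` holds for some symmetric `P`) upper-bounds the impact of any stealthy attack
that starts and ends at the equilibrium `x = 0`. -/
theorem dual_feasible_gamma_bounds_stealthy_impact
    {n m p r : ℕ}
    (A : Matrix (Fin n) (Fin n) ℝ) (B : Matrix (Fin n) (Fin m) ℝ)
    (Cp : Matrix (Fin p) (Fin n) ℝ) (Dp : Matrix (Fin p) (Fin m) ℝ)
    (Cr : Matrix (Fin r) (Fin n) ℝ) (Dr : Matrix (Fin r) (Fin m) ℝ)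
    (γ : ℝ) (hγ : 0 ≤ γ)
    (P : Matrix (Fin n) (Fin n) ℝ) (hP : P.IsSymm)
    (hLMI : ∀ (x : Fin n → ℝ) (a : Fin m → ℝ),
      (A.mulVec x + B.mulVec a) ⬝ᵥ P.mulVec (A.mulVec x + B.mulVec a)
        - x ⬝ᵥ P.mulVec x
        + ∑ i, ((Cp.mulVec x + Dp.mulVec a) i) ^ 2
        - γ * ∑ i, ((Cr.mulVec x + Dr.mulVec a) i) ^ 2 ≤ 0)
    (x : ℕ → Fin n → ℝ) (a : ℕ → Fin m → ℝ)
    (hdyn : ∀ k, x (k + 1) = A.mulVec (x k) + B.mulVec (a k))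
    (hx0 : x 0 = 0)
    (N : ℕ) (hxN : x N = 0)
    (yp : ℕ → Fin p → ℝ) (yr : ℕ → Fin r → ℝ)
    (hyp : ∀ k, yp k = Cp.mulVec (x k) + Dp.mulVec (a k))
    (hyr : ∀ k, yr k = Cr.mulVec (x k) + Dr.mulVec (a k))
    (hstealthy : ∑ k ∈ Finset.range N, ∑ i, (yr k i) ^ 2 ≤ 1) :
    ∑ k ∈ Finset.range N, ∑ i, (yp k i) ^ 2 ≤ γ := by
  set V : ℕ → ℝ := fun k => x k ⬝ᵥ P.mulVec (x k) with hV
  have key : ∀ k, V (k+1) - V k + ∑ i, (yp k i)^2 - γ * ∑ i, (yr k i)^2 ≤ 0 := by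
    intro k
    have := hLMI (x k) (a k)
    rw [hyp k, hyr k, hV]
    simpa [← hdyn k] using this
  have hsum : ∑ k ∈ Finset.range N,
      (V (k+1) - V k + ∑ i, (yp k i)^2 - γ * ∑ i, (yr k i)^2) ≤ 0 :=
    Finset.sum_nonpos fun k _ => key k
  have htel : ∑ k ∈ Finset.range N, (V (k+1) - V k) = V N - V 0 :=
    Finset.sum_range_sub V N
  have hV0 : V 0 = 0 := by simp [hV, hx0]
  have hVN : V N = 0 := by simp [hV, hxN]
  have hsum' : ∑ k ∈ Finset.range N, ∑ i, (yp k i)^2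
      ≤ γ * ∑ k ∈ Finset.range N, ∑ i, (yr k i)^2 := by
    have : ∑ k ∈ Finset.range N, (V (k+1) - V k)
        + ∑ k ∈ Finset.range N, (∑ i, (yp k i)^2)
        - ∑ k ∈ Finset.range N, (γ * ∑ i, (yr k i)^2) ≤ 0 := by
      rw [← Finset.sum_add_distrib, ← Finset.sum_sub_distrib]
      exact hsum
    rw [htel, hV0, hVN, ← Finset.mul_sum] at this
    linarith
  calc ∑ k ∈ Finset.range N, ∑ i, (yp k i)^2
      ≤ γ * ∑ k ∈ Finset.range N, ∑ i, (yr k i)^2 := hsum'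
    _ ≤ γ * 1 := by exact mul_le_mul_of_nonneg_left hstealthy hγ
    _ = γ := mul_one γ
end

section
/- Suppose (γ,P) satisfies the dissipation LMI M(γ,P) ⪯ 0. Let x : ℕ → ℝⁿ and a : ℕ → ℝᵐ be sequences satisfying x[k+1] = A x[k] + B a[k] for all k, with x[0] = 0 and x[k] → 0 as k → ∞, and let y_p[k] = C_p x[k] + D_p a[k] and y_r[k] = C_r x[k] + D_r a[k]. If the residual energy series ∑_{k=0}^{∞} ‖y_r[k]‖² is summable, then the performance energy series ∑_{k=0}^{∞} ‖y_p[k]‖² is summable and ∑_{k=0}^{∞} ‖y_p[k]‖² ≤ γ · ∑_{k=0}^{∞} ‖y_r[k]‖². -/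
/-!
Summing the dissipation inequality `‖y_p‖² ≤ γ ‖y_r‖² + V(x[k]) - V(x[k+1])`, with storage
`V v = vᵀ P v`, along the trajectory telescopes: the performance energy up to time `N` is at
most `γ` times the residual energy up to time `N` minus `V(x[N])`. Since `x[0] = 0` and
`V(x[N]) → V 0 = 0`, the bound passes to the limit `N → ∞`.
-/

open Matrix Finset Filter Topology

section Telescoping

variable {f g V : ℕ → ℝ}

theorem sum_range_le_add_sub_of_le_add_sub_succ (hstep : ∀ k, f k ≤ g k + (V k - V (k + 1)))
    (N : ℕ) : ∑ k ∈ range N, f k ≤ ∑ k ∈ range N, g k + (V 0 - V N) := by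
  calc ∑ k ∈ range N, f k ≤ ∑ k ∈ range N, (g k + (V k - V (k + 1))) :=
        sum_le_sum fun k _ => hstep k
    _ = ∑ k ∈ range N, g k + (V 0 - V N) := by
        rw [sum_add_distrib, sum_range_sub']

theorem summable_and_tsum_le_of_le_add_sub_succ {L : ℝ} (hf : ∀ k, 0 ≤ f k) (hg : Summable g)
    (hV : Tendsto V atTop (𝓝 L)) (hstep : ∀ k, f k ≤ g k + (V k - V (k + 1))) :
    Summable f ∧ ∑' k, f k ≤ ∑' k, g k + (V 0 - L) := by
  have hbound := sum_range_le_add_sub_of_le_add_sub_succ hstep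
  have hlim : Tendsto (fun N => ∑ k ∈ range N, g k + (V 0 - V N)) atTop
      (𝓝 (∑' k, g k + (V 0 - L))) :=
    hg.hasSum.tendsto_sum_nat.add (tendsto_const_nhds.sub hV)
  obtain ⟨c, hc⟩ := hlim.bddAbove_range
  have hfs : Summable f :=
    summable_of_sum_range_le hf fun N => (hbound N).trans (hc ⟨N, rfl⟩)
  exact ⟨hfs, le_of_tendsto_of_tendsto' hfs.hasSum.tendsto_sum_nat hlim hbound⟩

end Telescoping

theorem Matrix.continuous_quadForm {n : Type*} [Fintype n] (P : Matrix n n ℝ) :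
    Continuous fun v : n → ℝ => v ⬝ᵥ P *ᵥ v :=
  continuous_id.dotProduct (continuous_const.matrix_mulVec continuous_id)

theorem dissipation_infinite_horizon_energy_bound_general
    {n m p r : ℕ}
    (A : Matrix (Fin n) (Fin n) ℝ) (B : Matrix (Fin n) (Fin m) ℝ)
    (Cp : Matrix (Fin p) (Fin n) ℝ) (Dp : Matrix (Fin p) (Fin m) ℝ)
    (Cr : Matrix (Fin r) (Fin n) ℝ) (Dr : Matrix (Fin r) (Fin m) ℝ)
    (γ : ℝ)
    (P : Matrix (Fin n) (Fin n) ℝ)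
    (hLMI : ∀ (x : Fin n → ℝ) (a : Fin m → ℝ),
      (A.mulVec x + B.mulVec a) ⬝ᵥ P.mulVec (A.mulVec x + B.mulVec a)
        - x ⬝ᵥ P.mulVec x
        + ∑ i, ((Cp.mulVec x + Dp.mulVec a) i) ^ 2
        - γ * ∑ i, ((Cr.mulVec x + Dr.mulVec a) i) ^ 2 ≤ 0)
    (x : ℕ → Fin n → ℝ) (a : ℕ → Fin m → ℝ)
    (hdyn : ∀ k, x (k + 1) = A.mulVec (x k) + B.mulVec (a k))
    (hx0 : x 0 = 0)
    (hxlim : Tendsto x atTop (nhds 0))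
    (yp : ℕ → Fin p → ℝ) (yr : ℕ → Fin r → ℝ)
    (hyp : ∀ k, yp k = Cp.mulVec (x k) + Dp.mulVec (a k))
    (hyr : ∀ k, yr k = Cr.mulVec (x k) + Dr.mulVec (a k))
    (hsum : Summable fun k => ∑ i, (yr k i) ^ 2) :
    (Summable fun k => ∑ i, (yp k i) ^ 2) ∧
      ∑' k, ∑ i, (yp k i) ^ 2 ≤ γ * ∑' k, ∑ i, (yr k i) ^ 2 := by
  set V : (Fin n → ℝ) → ℝ := fun v => v ⬝ᵥ P *ᵥ v
  have hstep (k : ℕ) :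
      ∑ i, (yp k i) ^ 2 ≤ γ * ∑ i, (yr k i) ^ 2 + (V (x k) - V (x (k + 1))) := by
    have := hLMI (x k) (a k)
    rw [← hdyn k, ← hyp k, ← hyr k] at this
    linarith
  have hVlim : Tendsto (fun k => V (x k)) atTop (𝓝 0) := by
    simpa [V, Function.comp_def] using (P.continuous_quadForm.tendsto 0).comp hxlim
  obtain ⟨hsummable, hle⟩ := summable_and_tsum_le_of_le_add_sub_succ
    (fun k => sum_nonneg fun i _ => sq_nonneg (yp k i)) (hsum.mul_left γ) hVlim hstep
  refine ⟨hsummable, ?_⟩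
  simpa [V, hx0, tsum_mul_left] using hle

/-- If `(γ, P)` satisfies the dissipation LMI `M(γ,P) ⪯ 0`, then along any
trajectory starting at `x 0 = 0` with `x k → 0` as `k → ∞`, summability of the residual
energy implies summability of the performance energy, and the total performance energy is
bounded by `γ` times the total residual energy. -/
theorem dissipation_infinite_horizon_energy_bound
    {n m p r : ℕ}
    (A : Matrix (Fin n) (Fin n) ℝ) (B : Matrix (Fin n) (Fin m) ℝ)
    (Cp : Matrix (Fin p) (Fin n) ℝ) (Dp : Matrix (Fin p) (Fin m) ℝ)
    (Cr : Matrix (Fin r) (Fin n) ℝ) (Dr : Matrix (Fin r) (Fin m) ℝ)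
    (γ : ℝ) (hγ : 0 ≤ γ)
    (P : Matrix (Fin n) (Fin n) ℝ) (hP : P.IsSymm)
    (hLMI : ∀ (x : Fin n → ℝ) (a : Fin m → ℝ),
      (A.mulVec x + B.mulVec a) ⬝ᵥ P.mulVec (A.mulVec x + B.mulVec a)
        - x ⬝ᵥ P.mulVec x
        + ∑ i, ((Cp.mulVec x + Dp.mulVec a) i) ^ 2
        - γ * ∑ i, ((Cr.mulVec x + Dr.mulVec a) i) ^ 2 ≤ 0)
    (x : ℕ → Fin n → ℝ) (a : ℕ → Fin m → ℝ)
    (hdyn : ∀ k, x (k + 1) = A.mulVec (x k) + B.mulVec (a k))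
    (hx0 : x 0 = 0)
    (hxlim : Tendsto x atTop (nhds 0))
    (yp : ℕ → Fin p → ℝ) (yr : ℕ → Fin r → ℝ)
    (hyp : ∀ k, yp k = Cp.mulVec (x k) + Dp.mulVec (a k))
    (hyr : ∀ k, yr k = Cr.mulVec (x k) + Dr.mulVec (a k))
    (hsum : Summable fun k => ∑ i, (yr k i) ^ 2) :
    (Summable fun k => ∑ i, (yp k i) ^ 2) ∧
      ∑' k, ∑ i, (yp k i) ^ 2 ≤ γ * ∑' k, ∑ i, (yr k i) ^ 2 :=
  dissipation_infinite_horizon_energy_bound_general A B Cp Dp Cr Dr γ P hLMI x a hdyn hx0 hxlim yp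
    yr hyp hyr hsum
end

section
/- Suppose (γ,P) satisfies the dissipation LMI M(γ,P) ⪯ 0 (with P symmetric and γ ≥ 0). Let z ∈ ℂ with |z| = 1 be such that the complex matrix zI − A is invertible (A viewed as a complex matrix entrywise), and define the transfer matrices G_p(z) = C_p (zI − A)^{-1} B + D_p and G_r(z) = C_r (zI − A)^{-1} B + D_r over ℂ. Then for every complex vector a ∈ ℂᵐ, ‖G_p(z) a‖² ≤ γ · ‖G_r(z) a‖², i.e., the frequency-domain inequality γ G_r(z)ᴴ G_r(z) − G_p(z)ᴴ G_p(z) ⪰ 0 holds on the unit circle. -/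
open Matrix Finset

lemma re_mulVec' {k n : ℕ} (R : Matrix (Fin k) (Fin n) ℝ) (v : Fin n → ℂ) (i : Fin k) :
    ((R.map Complex.ofReal).mulVec v i).re = R.mulVec (fun j => (v j).re) i := by
  simp [Matrix.mulVec, dotProduct, Complex.re_sum]

lemma im_mulVec' {k n : ℕ} (R : Matrix (Fin k) (Fin n) ℝ) (v : Fin n → ℂ) (i : Fin k) :
    ((R.map Complex.ofReal).mulVec v i).im = R.mulVec (fun j => (v j).im) i := by
  simp [Matrix.mulVec, dotProduct, Complex.im_sum]

lemma quad_unit' {n : ℕ} (P : Matrix (Fin n) (Fin n) ℝ) (z : ℂ)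
    (hz : z.re ^ 2 + z.im ^ 2 = 1) (x : Fin n → ℂ) :
    (fun j => (z * x j).re) ⬝ᵥ P.mulVec (fun j => (z * x j).re)
      + (fun j => (z * x j).im) ⬝ᵥ P.mulVec (fun j => (z * x j).im)
    = (fun j => (x j).re) ⬝ᵥ P.mulVec (fun j => (x j).re)
      + (fun j => (x j).im) ⬝ᵥ P.mulVec (fun j => (x j).im) := by
  simp only [dotProduct, Matrix.mulVec, Finset.mul_sum, ← Finset.sum_add_distrib]
  refine Finset.sum_congr rfl fun i _ => ?_
  refine Finset.sum_congr rfl fun j _ => ?_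
  simp only [Complex.mul_re, Complex.mul_im]
  linear_combination (P i j * ((x i).re * (x j).re + (x i).im * (x j).im)) * hz


/-- If `(γ, P)` satisfies the dissipation LMI `M(γ,P) ⪯ 0`, then the
frequency-domain inequality `γ G_r(z)ᴴ G_r(z) − G_p(z)ᴴ G_p(z) ⪰ 0` holds at every point
`z` of the unit circle where `z I − A` is invertible: for every complex input direction
`a`, `‖G_p(z) a‖² ≤ γ ‖G_r(z) a‖²`. -/
theorem dissipation_LMI_implies_frequency_domain_inequality
    {n m p r : ℕ}
    (A : Matrix (Fin n) (Fin n) ℝ) (B : Matrix (Fin n) (Fin m) ℝ)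
    (Cp : Matrix (Fin p) (Fin n) ℝ) (Dp : Matrix (Fin p) (Fin m) ℝ)
    (Cr : Matrix (Fin r) (Fin n) ℝ) (Dr : Matrix (Fin r) (Fin m) ℝ)
    (γ : ℝ) (hγ : 0 ≤ γ)
    (P : Matrix (Fin n) (Fin n) ℝ) (hP : P.IsSymm)
    (hLMI : ∀ (x : Fin n → ℝ) (a : Fin m → ℝ),
      (A.mulVec x + B.mulVec a) ⬝ᵥ P.mulVec (A.mulVec x + B.mulVec a)
        - x ⬝ᵥ P.mulVec x
        + ∑ i, ((Cp.mulVec x + Dp.mulVec a) i) ^ 2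
        - γ * ∑ i, ((Cr.mulVec x + Dr.mulVec a) i) ^ 2 ≤ 0)
    (z : ℂ) (hz : ‖z‖ = 1)
    (hinv : IsUnit (z • (1 : Matrix (Fin n) (Fin n) ℂ) - A.map Complex.ofReal))
    (Gp : Matrix (Fin p) (Fin m) ℂ) (Gr : Matrix (Fin r) (Fin m) ℂ)
    (hGp : Gp = Cp.map Complex.ofReal *
      (z • (1 : Matrix (Fin n) (Fin n) ℂ) - A.map Complex.ofReal)⁻¹ *
      B.map Complex.ofReal + Dp.map Complex.ofReal)
    (hGr : Gr = Cr.map Complex.ofReal *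
      (z • (1 : Matrix (Fin n) (Fin n) ℂ) - A.map Complex.ofReal)⁻¹ *
      B.map Complex.ofReal + Dr.map Complex.ofReal) :
    ∀ a : Fin m → ℂ,
      ∑ i, ‖Gp.mulVec a i‖ ^ 2 ≤ γ * ∑ i, ‖Gr.mulVec a i‖ ^ 2 := by
  intro a
  set M := z • (1 : Matrix (Fin n) (Fin n) ℂ) - A.map Complex.ofReal with hM
  have hdet : IsUnit M.det := (Matrix.isUnit_iff_isUnit_det M).mp hinv
  set x : Fin n → ℂ := M⁻¹.mulVec ((B.map Complex.ofReal).mulVec a) with hxdef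
  have hx : M.mulVec x = (B.map Complex.ofReal).mulVec a := by
    rw [hxdef, Matrix.mulVec_mulVec, Matrix.mul_nonsing_inv _ hdet, Matrix.one_mulVec]
  have hABa : (A.map Complex.ofReal).mulVec x + (B.map Complex.ofReal).mulVec a = z • x := by
    have h2 : M.mulVec x = z • x - (A.map Complex.ofReal).mulVec x := by
      rw [hM, Matrix.sub_mulVec, Matrix.smul_mulVec, Matrix.one_mulVec]
    rw [← hx, h2]; abel
  have hGpa : Gp.mulVec a
      = (Cp.map Complex.ofReal).mulVec x + (Dp.map Complex.ofReal).mulVec a := by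
    rw [hGp, Matrix.add_mulVec, ← Matrix.mulVec_mulVec, ← Matrix.mulVec_mulVec, hxdef]
  have hGra : Gr.mulVec a
      = (Cr.map Complex.ofReal).mulVec x + (Dr.map Complex.ofReal).mulVec a := by
    rw [hGr, Matrix.add_mulVec, ← Matrix.mulVec_mulVec, ← Matrix.mulVec_mulVec, hxdef]
  set xre : Fin n → ℝ := fun j => (x j).re
  set xim : Fin n → ℝ := fun j => (x j).im
  set are : Fin m → ℝ := fun j => (a j).re
  set aim : Fin m → ℝ := fun j => (a j).im
  have e1 : A.mulVec xre + B.mulVec are = fun i => (z * x i).re := by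
    funext i
    have h := congrFun hABa i
    have : ((A.map Complex.ofReal).mulVec x i + (B.map Complex.ofReal).mulVec a i).re
        = (z * x i).re := by
      rw [show (A.map Complex.ofReal).mulVec x i + (B.map Complex.ofReal).mulVec a i
          = z * x i from h]
    simpa [Complex.add_re, re_mulVec'] using this
  have e2 : A.mulVec xim + B.mulVec aim = fun i => (z * x i).im := by
    funext i
    have h := congrFun hABa i
    have : ((A.map Complex.ofReal).mulVec x i + (B.map Complex.ofReal).mulVec a i).im
        = (z * x i).im := by
      rw [show (A.map Complex.ofReal).mulVec x i + (B.map Complex.ofReal).mulVec a i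
          = z * x i from h]
    simpa [Complex.add_im, im_mulVec'] using this
  have e3 : Cp.mulVec xre + Dp.mulVec are = fun i => (Gp.mulVec a i).re := by
    funext i
    have h := congrFun hGpa i
    simp only [Pi.add_apply] at h ⊢
    rw [h, Complex.add_re, re_mulVec', re_mulVec']
  have e4 : Cp.mulVec xim + Dp.mulVec aim = fun i => (Gp.mulVec a i).im := by
    funext i
    have h := congrFun hGpa i
    simp only [Pi.add_apply] at h ⊢
    rw [h, Complex.add_im, im_mulVec', im_mulVec']
  have e5 : Cr.mulVec xre + Dr.mulVec are = fun i => (Gr.mulVec a i).re := by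
    funext i
    have h := congrFun hGra i
    simp only [Pi.add_apply] at h ⊢
    rw [h, Complex.add_re, re_mulVec', re_mulVec']
  have e6 : Cr.mulVec xim + Dr.mulVec aim = fun i => (Gr.mulVec a i).im := by
    funext i
    have h := congrFun hGra i
    simp only [Pi.add_apply] at h ⊢
    rw [h, Complex.add_im, im_mulVec', im_mulVec']
  have hz' : z.re ^ 2 + z.im ^ 2 = 1 := by
    have h1 : z.re ^ 2 + z.im ^ 2 = ‖z‖ ^ 2 := by
      rw [Complex.sq_norm, Complex.normSq_apply]; ring
    rw [h1, hz]; norm_num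
  have key1 := hLMI xre are
  have key2 := hLMI xim aim
  rw [e1, e3, e5] at key1
  rw [e2, e4, e6] at key2
  have quad := quad_unit' P z hz' x
  have hnorm : ∀ (k : ℕ) (v : Fin k → ℂ),
      ∑ i, ‖v i‖ ^ 2 = ∑ i, (v i).re ^ 2 + ∑ i, (v i).im ^ 2 := by
    intro k v
    rw [← Finset.sum_add_distrib]
    refine Finset.sum_congr rfl fun i _ => ?_
    rw [Complex.sq_norm, Complex.normSq_apply]; ring
  rw [hnorm p (Gp.mulVec a), hnorm r (Gr.mulVec a)]
  have hxq : xre ⬝ᵥ P.mulVec xre + xim ⬝ᵥ P.mulVec xim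
      = (fun j => (x j).re) ⬝ᵥ P.mulVec (fun j => (x j).re)
        + (fun j => (x j).im) ⬝ᵥ P.mulVec (fun j => (x j).im) := rfl
  nlinarith [key1, key2, quad]
end

section
/- Let A be a complex p × n matrix and B a complex q × n matrix. There exists a real number γ ≥ 0 such that the Hermitian matrix γ · AᴴA − BᴴB is positive semidefinite if and only if the kernel of A is contained in the kernel of B, i.e., for every x ∈ ℂⁿ, A x = 0 implies B x = 0. -/
open Matrix
open scoped ComplexOrder

private lemma exists_factor {K : Type*} [Field K] {V W U : Type*}
    [AddCommGroup V] [Module K V] [AddCommGroup W] [Module K W]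
    [AddCommGroup U] [Module K U]
    (f : V →ₗ[K] W) (g : V →ₗ[K] U) (h : LinearMap.ker f ≤ LinearMap.ker g) :
    ∃ C : W →ₗ[K] U, ∀ x, C (f x) = g x := by
  let φ : (V ⧸ LinearMap.ker f) →ₗ[K] U := (LinearMap.ker f).liftQ g h
  let h0 : (LinearMap.range f) →ₗ[K] U := φ ∘ₗ f.quotKerEquivRange.symm.toLinearMap
  obtain ⟨C, hC⟩ := h0.exists_extend
  refine ⟨C, fun x => ?_⟩
  have hmem : f x ∈ LinearMap.range f := LinearMap.mem_range_self f x
  have h1 : C (f x) = h0 ⟨f x, hmem⟩ := by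
    have := congrArg (fun ψ : (LinearMap.range f) →ₗ[K] U => ψ ⟨f x, hmem⟩) hC
    simpa using this
  rw [h1]
  show φ (f.quotKerEquivRange.symm ⟨f x, hmem⟩) = g x
  rw [LinearMap.quotKerEquivRange_symm_apply_image]
  simp [φ, Submodule.mkQ_apply, Submodule.liftQ_apply]

/-- For complex matrices `A : p × n` and `B : q × n`, there exists
`γ ≥ 0` making `γ AᴴA − BᴴB` positive semidefinite iff the kernel of `A` is contained in
the kernel of `B`. -/
theorem exists_gamma_posSemidef_iff_ker_subset
    {p q n : ℕ}
    (A : Matrix (Fin p) (Fin n) ℂ) (B : Matrix (Fin q) (Fin n) ℂ) :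
    (∃ γ : ℝ, 0 ≤ γ ∧ ((γ : ℂ) • (Aᴴ * A) - Bᴴ * B).PosSemidef) ↔
      (∀ x : Fin n → ℂ, A.mulVec x = 0 → B.mulVec x = 0) := by
  have quad : ∀ {m : ℕ} (M : Matrix (Fin m) (Fin n) ℂ) (x : Fin n → ℂ),
      star x ⬝ᵥ (Mᴴ * M) *ᵥ x = star (M *ᵥ x) ⬝ᵥ (M *ᵥ x) := by
    intro m M x
    rw [← mulVec_mulVec, dotProduct_mulVec, vecMul_conjTranspose, star_star]
  constructor
  · rintro ⟨γ, hγ0, hPSD⟩ x hAx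
    have h := hPSD.dotProduct_mulVec_nonneg x
    rw [sub_mulVec, dotProduct_sub, smul_mulVec, dotProduct_smul, quad A, quad B,
      hAx] at h
    simp only [star_zero, zero_dotProduct, smul_zero, zero_sub] at h
    have hnn : 0 ≤ star (B *ᵥ x) ⬝ᵥ (B *ᵥ x) :=
      Finset.sum_nonneg fun i _ => star_mul_self_nonneg _
    have hz : star (B *ᵥ x) ⬝ᵥ (B *ᵥ x) = 0 :=
      le_antisymm (neg_nonneg.mp h) hnn
    funext i
    have := (Finset.sum_eq_zero_iff_of_nonneg
      (fun i _ => star_mul_self_nonneg ((B *ᵥ x) i))).mp hz i (Finset.mem_univ i)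
    simpa using CStarRing.star_mul_self_eq_zero_iff _ |>.mp this
  · intro hker
    obtain ⟨C, hC⟩ := exists_factor A.mulVecLin B.mulVecLin (fun x hx => by
      simp only [LinearMap.mem_ker, Matrix.mulVecLin_apply] at hx ⊢
      exact hker x hx)
    set M := LinearMap.toMatrix' C with hMdef
    have hM : ∀ y, M *ᵥ y = C y := fun y => by
      rw [hMdef, ← Matrix.toLin'_apply, Matrix.toLin'_toMatrix']
    set γ : ℝ := ∑ i, ∑ j, ‖M i j‖ ^ 2 with hγdef
    have hγ0 : 0 ≤ γ :=
      Finset.sum_nonneg fun _ _ => Finset.sum_nonneg fun _ _ => sq_nonneg _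
    have key : ∀ y : Fin p → ℂ, ∑ i, ‖(M *ᵥ y) i‖ ^ 2 ≤ γ * ∑ j, ‖y j‖ ^ 2 := by
      intro y
      have h1 : ∀ i, ‖(M *ᵥ y) i‖ ^ 2 ≤ (∑ j, ‖M i j‖ ^ 2) * ∑ j, ‖y j‖ ^ 2 := by
        intro i
        calc ‖(M *ᵥ y) i‖ ^ 2 ≤ (∑ j, ‖M i j‖ * ‖y j‖) ^ 2 := by
              apply pow_le_pow_left₀ (norm_nonneg _)
              calc ‖(M *ᵥ y) i‖ = ‖∑ j, M i j * y j‖ := by rfl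
                _ ≤ ∑ j, ‖M i j * y j‖ := norm_sum_le _ _
                _ = ∑ j, ‖M i j‖ * ‖y j‖ := by simp [norm_mul]
          _ ≤ (∑ j, ‖M i j‖ ^ 2) * ∑ j, ‖y j‖ ^ 2 :=
              Finset.sum_mul_sq_le_sq_mul_sq _ _ _
      calc ∑ i, ‖(M *ᵥ y) i‖ ^ 2
          ≤ ∑ i, (∑ j, ‖M i j‖ ^ 2) * ∑ j, ‖y j‖ ^ 2 :=
            Finset.sum_le_sum fun i _ => h1 i
        _ = γ * ∑ j, ‖y j‖ ^ 2 := by rw [hγdef, Finset.sum_mul]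
    refine ⟨γ, hγ0, .of_dotProduct_mulVec_nonneg ?_ ?_⟩
    · rw [Matrix.IsHermitian, conjTranspose_sub, conjTranspose_smul,
        (isHermitian_conjTranspose_mul_self A).eq, (isHermitian_conjTranspose_mul_self B).eq,
        Complex.star_def, Complex.conj_ofReal]
    · intro x
      rw [sub_mulVec, dotProduct_sub, smul_mulVec, dotProduct_smul, quad A, quad B]
      have hBx : B *ᵥ x = M *ᵥ (A *ᵥ x) := by
        rw [hM]
        simpa [Matrix.mulVecLin_apply] using (hC x).symm
      rw [hBx]
      set y := A *ᵥ x with hy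
      have e1 : star y ⬝ᵥ y = ((∑ i, ‖y i‖ ^ 2 : ℝ) : ℂ) := by
        simp [dotProduct, Complex.star_def, Complex.conj_mul']
      have e2 : star (M *ᵥ y) ⬝ᵥ (M *ᵥ y) = ((∑ i, ‖(M *ᵥ y) i‖ ^ 2 : ℝ) : ℂ) := by
        simp [dotProduct, Complex.star_def, Complex.conj_mul']
      rw [e1, e2, smul_eq_mul, ← Complex.ofReal_mul, ← Complex.ofReal_sub,
        Complex.zero_le_real, sub_nonneg]
      exact key y
end

section
/- Let G_r and G_p be functions from ℂ to the complex r × m and p × m matrices respectively, each continuous on the unit circle {z ∈ ℂ : |z| = 1}. Suppose that for every z on the unit circle, G_r(z) has trivial kernel, i.e., G_r(z) s = 0 implies s = 0 for s ∈ ℂᵐ. Then there exists a real number γ ≥ 0 such that for every z on the unit circle, the Hermitian matrix γ · G_r(z)ᴴ G_r(z) − G_p(z)ᴴ G_p(z) is positive semidefinite. (This is the sufficiency of condition (1) of Lemma 2: if the residual system has no zeros on the unit circle, the frequency-domain inequality admits a bounded γ.) -/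
open Matrix
open scoped ComplexOrder

private lemma quad_form_eq {n m : ℕ} (A : Matrix (Fin n) (Fin m) ℂ) (x : Fin m → ℂ) :
    star x ⬝ᵥ (Aᴴ * A) *ᵥ x = ((∑ i, Complex.normSq ((A *ᵥ x) i) : ℝ) : ℂ) := by
  rw [← Matrix.mulVec_mulVec, Matrix.dotProduct_mulVec, ← Matrix.star_mulVec]
  simp [dotProduct, Complex.normSq_eq_conj_mul_self, Complex.star_def]

/-- sufficiency of condition (1) of Lemma 2. If `G_r` and `G_p` are
continuous on the unit circle and `G_r(z)` has trivial kernel for every `z` on the unit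
circle (no zeros on the unit circle), then there is a single `γ ≥ 0` such that the
frequency-domain inequality `γ G_r(z)ᴴ G_r(z) − G_p(z)ᴴ G_p(z) ⪰ 0` holds on the whole
unit circle. -/
theorem exists_uniform_gamma_of_trivial_kernel_on_circle
    {r p m : ℕ}
    (Gr : ℂ → Matrix (Fin r) (Fin m) ℂ) (Gp : ℂ → Matrix (Fin p) (Fin m) ℂ)
    (hGr_cont : ContinuousOn Gr (Metric.sphere (0 : ℂ) 1))
    (hGp_cont : ContinuousOn Gp (Metric.sphere (0 : ℂ) 1))
    (hker : ∀ z : ℂ, ‖z‖ = 1 → ∀ s : Fin m → ℂ, (Gr z).mulVec s = 0 → s = 0) :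
    ∃ γ : ℝ, 0 ≤ γ ∧ ∀ z : ℂ, ‖z‖ = 1 →
      ((γ : ℂ) • ((Gr z)ᴴ * Gr z) - (Gp z)ᴴ * Gp z).PosSemidef := by
  -- the hermitian part is easy
  have hHerm : ∀ (γ : ℝ) (z : ℂ),
      ((γ : ℂ) • ((Gr z)ᴴ * Gr z) - (Gp z)ᴴ * Gp z).IsHermitian := by
    intro γ z
    refine Matrix.IsHermitian.sub ?_ (Matrix.isHermitian_conjTranspose_mul_self _)
    rw [Matrix.IsHermitian, Matrix.conjTranspose_smul,
      (Matrix.isHermitian_conjTranspose_mul_self (Gr z)).eq, Complex.star_def, Complex.conj_ofReal]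
  -- trivial case `m = 0`
  rcases Nat.eq_zero_or_pos m with hm | hm
  · subst hm
    refine ⟨0, le_refl 0, fun z hz => Matrix.PosSemidef.of_dotProduct_mulVec_nonneg (hHerm 0 z) fun x => ?_⟩
    have hx : x = 0 := funext fun i => absurd i.2 (by omega)
    simp [hx]
  -- main case: compactness argument
  set K : Set (ℂ × (Fin m → ℂ)) :=
    (Metric.sphere (0 : ℂ) 1) ×ˢ (Metric.sphere (0 : Fin m → ℂ) 1) with hK
  have hKcomp : IsCompact K := (isCompact_sphere _ _).prod (isCompact_sphere _ _)
  have hKne : K.Nonempty := by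
    refine ⟨(1, fun _ => 1), ?_, ?_⟩
    · simp
    · have : Nonempty (Fin m) := ⟨⟨0, hm⟩⟩
      rw [mem_sphere_zero_iff_norm]
      rw [show ((1:ℂ), fun _ : Fin m => (1 : ℂ)).2 = (fun _ : Fin m => (1 : ℂ)) from rfl,
        pi_norm_const]
      simp
  -- continuity of the two quadratic functionals
  have hcont : ∀ (n : ℕ) (G : ℂ → Matrix (Fin n) (Fin m) ℂ),
      ContinuousOn G (Metric.sphere (0 : ℂ) 1) →
      ContinuousOn (fun q : ℂ × (Fin m → ℂ) => ∑ i, Complex.normSq ((G q.1 *ᵥ q.2) i)) K := by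
    intro n G hG
    apply continuousOn_finset_sum
    intro i _
    apply Complex.continuous_normSq.comp_continuousOn
    have hGm : ContinuousOn (fun q : ℂ × (Fin m → ℂ) => G q.1) K := by
      apply hG.comp continuous_fst.continuousOn
      intro q hq
      exact hq.1
    show ContinuousOn (fun q : ℂ × (Fin m → ℂ) => ∑ j, G q.1 i j * q.2 j) K
    apply continuousOn_finset_sum
    intro j _
    exact (((continuous_apply j).comp (continuous_apply i)).comp_continuousOn hGm).mul
      ((continuous_apply j).comp continuous_snd).continuousOn
  set f : ℂ × (Fin m → ℂ) → ℝ := fun q => ∑ i, Complex.normSq ((Gr q.1 *ᵥ q.2) i) with hf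
  set g : ℂ × (Fin m → ℂ) → ℝ := fun q => ∑ i, Complex.normSq ((Gp q.1 *ᵥ q.2) i) with hg
  obtain ⟨qc, hqcK, hqc⟩ := hKcomp.exists_isMinOn hKne (hcont r Gr hGr_cont)
  obtain ⟨qC, hqCK, hqC⟩ := hKcomp.exists_isMaxOn hKne (hcont p Gp hGp_cont)
  set c : ℝ := f qc with hc
  set C : ℝ := g qC with hCdef
  have hcpos : 0 < c := by
    rcases lt_or_eq_of_le (Finset.sum_nonneg fun i _ => Complex.normSq_nonneg _ : 0 ≤ c) with h | h
    · exact h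
    · exfalso
      have hz1 : ‖qc.1‖ = 1 := by
        have := hqcK.1; rwa [mem_sphere_zero_iff_norm] at this
      have hmv : Gr qc.1 *ᵥ qc.2 = 0 := by
        funext i
        have : Complex.normSq ((Gr qc.1 *ᵥ qc.2) i) = 0 := by
          have hle : Complex.normSq ((Gr qc.1 *ᵥ qc.2) i) ≤ c :=
            Finset.single_le_sum (fun j (_ : j ∈ Finset.univ) => Complex.normSq_nonneg _)
              (Finset.mem_univ i)
          have hge : 0 ≤ Complex.normSq ((Gr qc.1 *ᵥ qc.2) i) := Complex.normSq_nonneg _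
          linarith [h]
        simpa using Complex.normSq_eq_zero.mp this
      have := hker qc.1 hz1 qc.2 hmv
      have hx1 : ‖qc.2‖ = 1 := by
        have := hqcK.2; rwa [mem_sphere_zero_iff_norm] at this
      rw [this] at hx1
      simp at hx1
  have hCnn : 0 ≤ C := Finset.sum_nonneg fun i _ => Complex.normSq_nonneg _
  refine ⟨C / c, div_nonneg hCnn hcpos.le, fun z hz => ?_⟩
  refine Matrix.PosSemidef.of_dotProduct_mulVec_nonneg (hHerm _ z) fun x => ?_
  -- compute the quadratic form
  have hform : star x ⬝ᵥ (((C / c : ℝ) : ℂ) • ((Gr z)ᴴ * Gr z) - (Gp z)ᴴ * Gp z) *ᵥ x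
      = (((C / c) * f (z, x) - g (z, x) : ℝ) : ℂ) := by
    rw [Matrix.sub_mulVec, dotProduct_sub, Matrix.smul_mulVec, dotProduct_smul,
      quad_form_eq, quad_form_eq]
    simp only [hf, hg, smul_eq_mul]
    push_cast
    ring
  rw [hform]
  rw [Complex.zero_le_real]
  -- key real inequality, by scaling to the unit sphere
  rcases eq_or_ne x 0 with hx | hx
  · simp [hx, hf, hg, Matrix.mulVec_zero]
  · have hxn : ‖x‖ ≠ 0 := norm_ne_zero_iff.mpr hx
    set u : Fin m → ℂ := (‖x‖⁻¹ : ℂ) • x with hu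
    have huK : (z, u) ∈ K := by
      constructor
      · simpa [mem_sphere_zero_iff_norm] using hz
      · rw [mem_sphere_zero_iff_norm, hu, norm_smul]
        simp [hxn]
    have hscale : ∀ (n : ℕ) (A : Matrix (Fin n) (Fin m) ℂ),
        (∑ i, Complex.normSq ((A *ᵥ x) i))
          = ‖x‖ ^ 2 * ∑ i, Complex.normSq ((A *ᵥ u) i) := by
      intro n A
      rw [Finset.mul_sum]
      refine Finset.sum_congr rfl fun i _ => ?_
      rw [hu, Matrix.mulVec_smul]
      simp only [Pi.smul_apply, smul_eq_mul, Complex.normSq_mul, Complex.normSq_inv]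
      rw [Complex.normSq_ofReal]
      field_simp
    have hfx : f (z, x) = ‖x‖ ^ 2 * f (z, u) := hscale r (Gr z)
    have hgx : g (z, x) = ‖x‖ ^ 2 * g (z, u) := hscale p (Gp z)
    have h1 : c ≤ f (z, u) := hqc huK
    have h2 : g (z, u) ≤ C := hqC huK
    have hxsq : (0 : ℝ) ≤ ‖x‖ ^ 2 := sq_nonneg _
    rw [hfx, hgx]
    have key : g (z, u) ≤ (C / c) * f (z, u) := by
      calc g (z, u) ≤ C := h2
        _ = (C / c) * c := by field_simp
        _ ≤ (C / c) * f (z, u) := by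
            apply mul_le_mul_of_nonneg_left h1 (div_nonneg hCnn hcpos.le)
    nlinarith
end
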